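/- arXiv:2004.03651 — 3 statements merged into one kernel-verified Lean document; each statement's English description precedes it below -/
import Mathlib

section
/- Let a,b,c,d,e be real numbers with e ≥ 0. For a triple of reals (R₁,R₂,C), the following are equivalent: (1) there exist reals R̃₁,R̃₂,C₁,C₂ satisfying R̃₁ ≥ a, R̃₂ ≥ b, R̃₁+C₁ ≥ c, R̃₂+C₂ ≥ d, R̃₁+R̃₂−(R₁+R₂) ≤ e, 0 ≤ R₁ ≤ R̃₁, 0 ≤ R₂ ≤ R̃₂, and C₁+C₂ ≤ C; (2) R₁ ≥ max(a−e, 0), R₂ ≥ max(b−e, 0), R₁+R₂ ≥ a+b−e, and R₁+R₂+C ≥ c+d−e. -/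
/-- **Fourier–Motzkin elimination step.** For reals `a,b,c,d,e` with `e ≥ 0`, a triple
`(R₁,R₂,C)` of reals satisfies the system with auxiliary variables `R̃₁,R̃₂,C₁,C₂`
(`R̃₁ ≥ a`, `R̃₂ ≥ b`, `R̃₁+C₁ ≥ c`, `R̃₂+C₂ ≥ d`, `R̃₁+R̃₂−(R₁+R₂) ≤ e`,
`0 ≤ R₁ ≤ R̃₁`, `0 ≤ R₂ ≤ R̃₂`, `C₁+C₂ ≤ C`) iff `R₁ ≥ max(a−e,0)`, `R₂ ≥ max(b−e,0)`,
`R₁+R₂ ≥ a+b−e` and `R₁+R₂+C ≥ c+d−e`. -/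
theorem statement4 (a b c d e : ℝ) (he : 0 ≤ e) (R1 R2 C : ℝ) :
    (∃ Rt1 Rt2 C1 C2 : ℝ,
        a ≤ Rt1 ∧ b ≤ Rt2 ∧ c ≤ Rt1 + C1 ∧ d ≤ Rt2 + C2 ∧
        Rt1 + Rt2 - (R1 + R2) ≤ e ∧
        0 ≤ R1 ∧ R1 ≤ Rt1 ∧ 0 ≤ R2 ∧ R2 ≤ Rt2 ∧ C1 + C2 ≤ C) ↔
      (max (a - e) 0 ≤ R1 ∧ max (b - e) 0 ≤ R2 ∧
        a + b - e ≤ R1 + R2 ∧ c + d - e ≤ R1 + R2 + C) := by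
  constructor
  · rintro ⟨Rt1, Rt2, C1, C2, h1, h2, h3, h4, h5, h6, h7, h8, h9, h10⟩
    refine ⟨max_le (by linarith) h6, max_le (by linarith) h8, by linarith, by linarith⟩
  · rintro ⟨h1, h2, h3, h4⟩
    rw [max_le_iff] at h1 h2
    refine ⟨max a R1, max b (R1 + R2 + e - max a R1), c - max a R1,
      d - max b (R1 + R2 + e - max a R1), ?_⟩
    rcases max_cases a R1 with ⟨e1, p1⟩ | ⟨e1, p1⟩ <;>
      rcases max_cases b (R1 + R2 + e - max a R1) with ⟨e2, p2⟩ | ⟨e2, p2⟩ <;>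
      rw [e1] at * <;> rw [e2] <;>
      refine ⟨by linarith, by linarith, by linarith, by linarith, by linarith,
        by linarith, by linarith, by linarith, by linarith, by linarith⟩
end

section
/- Let n ≥ 1 and let (X₁,Z₁),…,(X_n,Z_n), K, M be random variables taking values in finite sets, defined on a common probability space, such that the pairs (X₁,Z₁),…,(X_n,Z_n) are mutually independent and K is independent of the whole collection ((X_i,Z_i))_{i=1}^n. Then H(M) ≥ Σ_{i=1}^n I( X_i ; (M, K, Z^{n∖i}) | Z_i ), where Z^{n∖i} denotes the tuple (Z_j : j ∈ {1,…,n}, j ≠ i). -/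
open scoped BigOperators Classical

noncomputable section

/-- A probability mass function on a finite type, represented as a real-valued function. -/
def IsPMF {α : Type*} [Fintype α] (p : α → ℝ) : Prop :=
  (∀ a, 0 ≤ p a) ∧ ∑ a, p a = 1

/-- Pushforward (marginal/image distribution) of `p` along `f`. -/
def push {α β : Type*} [Fintype α] (p : α → ℝ) (f : α → β) : β → ℝ :=
  fun b => ∑ a, if f a = b then p a else 0

/-- Shannon entropy (base 2) of a PMF, with the convention `0 * log 0 = 0`. -/
def Hent {α : Type*} [Fintype α] (p : α → ℝ) : ℝ :=
  ∑ a, -(p a * Real.logb 2 (p a))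

/-- Mutual information `I(A;B)` of a joint PMF on `α × β`. -/
def I2 {α β : Type*} [Fintype α] [Fintype β] (p : α × β → ℝ) : ℝ :=
  Hent (push p Prod.fst) + Hent (push p Prod.snd) - Hent p

/-- Conditional mutual information `I(A;B|C)` of a joint PMF on `α × β × γ`,
computed as `H(A,C) + H(B,C) - H(A,B,C) - H(C)`. -/
def CI {α β γ : Type*} [Fintype α] [Fintype β] [Fintype γ]
    (p : α × β × γ → ℝ) : ℝ :=
  Hent (push p (fun x => (x.1, x.2.2))) + Hent (push p Prod.snd)
    - Hent p - Hent (push p (fun x => x.2.2))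

/-- Markov chain `A − B − C` for a joint PMF on `α × β × γ`:
`A` and `C` are conditionally independent given `B`, i.e.
`p(a,b,c) p(b) = p(a,b) p(b,c)` for all `a, b, c`. -/
def Markov {α β γ : Type*} [Fintype α] [Fintype β] [Fintype γ]
    (p : α × β × γ → ℝ) : Prop :=
  ∀ a b c, p (a, b, c) * push p (fun x => x.2.1) b
    = push p (fun x => (x.1, x.2.1)) (a, b) * push p Prod.snd (b, c)

/-- Total variation distance `‖p − q‖₁ = (1/2) Σ |p a − q a|`. -/
def tvDist {α : Type*} [Fintype α] (p q : α → ℝ) : ℝ :=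
  (1 / 2) * ∑ a, |p a - q a|

/-- `⌈2^{nC}⌉`. -/
def NC (n : ℕ) (C : ℝ) : ℕ := ⌈(2 : ℝ) ^ ((n : ℝ) * C)⌉₊

set_option maxHeartbeats 1000000

namespace S8

variable {Ω α β γ : Type*} [Fintype Ω] [Fintype α] [Fintype β] [Fintype γ]

lemma push_nonneg {p : Ω → ℝ} (hp : ∀ a, 0 ≤ p a) (f : Ω → α) (b : α) : 0 ≤ push p f b :=
  Finset.sum_nonneg fun a _ => by split <;> simp [hp a]

lemma sum_push (p : Ω → ℝ) (f : Ω → α) (g : α → ℝ) :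
    ∑ b, push p f b * g b = ∑ a, p a * g (f a) := by
  unfold push
  simp only [Finset.sum_mul, ite_mul, zero_mul]
  rw [Finset.sum_comm]
  refine Finset.sum_congr rfl fun a _ => ?_
  simp

lemma push_sum (p : Ω → ℝ) (f : Ω → α) : ∑ b, push p f b = ∑ a, p a := by
  have := sum_push p f (fun _ => 1)
  simpa using this

lemma push_isPMF {p : Ω → ℝ} (hp : IsPMF p) (f : Ω → α) : IsPMF (push p f) :=
  ⟨push_nonneg hp.1 f, by rw [push_sum]; exact hp.2⟩

lemma push_push (p : Ω → ℝ) (f : Ω → α) (g : α → β) :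
    push (push p f) g = push p (g ∘ f) := by
  funext b
  unfold push
  have h1 : ∀ a : α, (if g a = b then ∑ ω, if f ω = a then p ω else 0 else 0)
      = ∑ ω, if f ω = a ∧ g a = b then p ω else 0 := by
    intro a
    split
    next h => exact Finset.sum_congr rfl fun ω _ => by simp [h]
    next h => simp [h]
  rw [Finset.sum_congr rfl fun a _ => h1 a, Finset.sum_comm]
  refine Finset.sum_congr rfl fun ω _ => ?_
  rw [Finset.sum_eq_single (f ω)]
  · simp [Function.comp]
  · intro x _ hx
    have : ¬(f ω = x ∧ g x = b) := fun h => hx h.1.symm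
    simp [this]
  · intro h
    exact absurd (Finset.mem_univ _) h

lemma le_push_self {p : Ω → ℝ} (hp : ∀ a, 0 ≤ p a) (f : Ω → α) (a : Ω) :
    p a ≤ push p f (f a) := by
  have := Finset.single_le_sum (f := fun x => if f x = f a then p x else 0)
    (fun x _ => by by_cases h : f x = f a <;> simp [h, hp x]) (Finset.mem_univ a)
  simpa [push] using this

lemma pmf_le_one {p : Ω → ℝ} (hp : IsPMF p) (a : Ω) : p a ≤ 1 := by
  rw [← hp.2]
  exact Finset.single_le_sum (fun x _ => hp.1 x) (Finset.mem_univ a)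

lemma Hent_push_le {p : Ω → ℝ} (hp : IsPMF p) (f : Ω → α) :
    Hent (push p f) ≤ Hent p := by
  unfold Hent
  have h1 : ∑ b, -(push p f b * Real.logb 2 (push p f b))
      = ∑ a, -(p a * Real.logb 2 (push p f (f a))) := by
    rw [Finset.sum_neg_distrib, Finset.sum_neg_distrib, neg_inj]
    exact sum_push p f (fun b => Real.logb 2 (push p f b))
  rw [h1]
  refine Finset.sum_le_sum fun a _ => ?_
  rcases (hp.1 a).lt_or_eq with hpa | hpa
  · have hle : Real.logb 2 (p a) ≤ Real.logb 2 (push p f (f a)) :=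
      Real.logb_le_logb_of_le (by norm_num) hpa (le_push_self hp.1 f a)
    have := mul_le_mul_of_nonneg_left hle hpa.le
    linarith
  · simp [← hpa]

lemma gibbs {p q : Ω → ℝ} (hp : IsPMF p) (hq0 : ∀ a, 0 ≤ q a) (hq1 : ∑ a, q a ≤ 1)
    (habs : ∀ a, 0 < p a → 0 < q a) :
    Hent p ≤ ∑ a, -(p a * Real.logb 2 (q a)) := by
  have h2 : (0:ℝ) < Real.log 2 := Real.log_pos one_lt_two
  have key : ∀ a, p a * (Real.logb 2 (q a) - Real.logb 2 (p a)) ≤ (q a - p a) / Real.log 2 := by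
    intro a
    rcases (hp.1 a).lt_or_eq with hpa | hpa
    · have hq := habs a hpa
      have hd : Real.logb 2 (q a) - Real.logb 2 (p a) = Real.log (q a / p a) / Real.log 2 := by
        rw [Real.log_div hq.ne' hpa.ne']
        simp [Real.logb, sub_div]
      rw [hd]
      have hle : Real.log (q a / p a) ≤ q a / p a - 1 :=
        Real.log_le_sub_one_of_pos (div_pos hq hpa)
      calc p a * (Real.log (q a / p a) / Real.log 2)
          ≤ p a * ((q a / p a - 1) / Real.log 2) := by
            gcongr
        _ = (q a - p a) / Real.log 2 := by
            field_simp
    · have h0 : 0 ≤ (q a - p a) / Real.log 2 := by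
        rw [← hpa]
        simp only [sub_zero]
        exact div_nonneg (hq0 a) h2.le
      simpa [← hpa] using h0
  have hsum : ∑ a, p a * (Real.logb 2 (q a) - Real.logb 2 (p a)) ≤ 0 := by
    calc ∑ a, p a * (Real.logb 2 (q a) - Real.logb 2 (p a))
        ≤ ∑ a, (q a - p a) / Real.log 2 := Finset.sum_le_sum fun a _ => key a
      _ = ((∑ a, q a) - 1) / Real.log 2 := by
          rw [← Finset.sum_div, Finset.sum_sub_distrib, hp.2]
      _ ≤ 0 := div_nonpos_iff.mpr (Or.inr ⟨by linarith, h2.le⟩)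
  unfold Hent
  have expand : ∀ a, -(p a * Real.logb 2 (q a))
      = -(p a * Real.logb 2 (p a)) - p a * (Real.logb 2 (q a) - Real.logb 2 (p a)) := by
    intro a; ring
  rw [Finset.sum_congr rfl fun a _ => expand a, Finset.sum_sub_distrib]
  linarith

lemma sum_neg_push (p : Ω → ℝ) (f : Ω → α) (g : α → ℝ) :
    ∑ x, -(p x * g (f x)) = ∑ b, -(push p f b * g b) := by
  rw [Finset.sum_neg_distrib, Finset.sum_neg_distrib, neg_inj]
  exact (sum_push p f g).symm

lemma Hent_comp_le {p : Ω → ℝ} (hp : IsPMF p) (f : Ω → α) (e : α → β) :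
    Hent (push p (e ∘ f)) ≤ Hent (push p f) := by
  rw [← push_push]
  exact Hent_push_le (push_isPMF hp f) e

lemma Hent_eq_rv {p : Ω → ℝ} (hp : IsPMF p) {f : Ω → α} {g : Ω → β}
    (e : α → β) (e' : β → α) (h1 : ∀ ω, e (f ω) = g ω) (h2 : ∀ ω, e' (g ω) = f ω) :
    Hent (push p f) = Hent (push p g) := by
  apply le_antisymm
  · have h := Hent_comp_le hp g e'
    rwa [show e' ∘ g = f from funext h2] at h
  · have h := Hent_comp_le hp f e
    rwa [show e ∘ f = g from funext h1] at h

lemma Hent_subadd {q : α × β → ℝ} (hq : IsPMF q) :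
    Hent q ≤ Hent (push q Prod.fst) + Hent (push q Prod.snd) := by
  set m1 := push q Prod.fst with hm1def
  set m2 := push q Prod.snd with hm2def
  have hm1 := push_isPMF hq Prod.fst
  have hm2 := push_isPMF hq Prod.snd
  have habs : ∀ x : α × β, 0 < q x → 0 < m1 x.1 * m2 x.2 := fun x hx =>
    mul_pos (lt_of_lt_of_le hx (le_push_self hq.1 Prod.fst x))
      (lt_of_lt_of_le hx (le_push_self hq.1 Prod.snd x))
  have hsum1 : ∑ x : α × β, m1 x.1 * m2 x.2 ≤ 1 := by
    rw [Fintype.sum_prod_type]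
    have : ∀ a : α, ∑ b, m1 a * m2 b = m1 a := by
      intro a; rw [← Finset.mul_sum, hm2.2, mul_one]
    rw [Finset.sum_congr rfl fun a _ => this a, hm1.2]
  have hG := gibbs (q := fun x : α × β => m1 x.1 * m2 x.2) hq
      (fun x => mul_nonneg (hm1.1 _) (hm2.1 _)) hsum1 habs
  refine hG.trans_eq ?_
  have hpt : ∀ x : α × β, -(q x * Real.logb 2 (m1 x.1 * m2 x.2))
      = -(q x * Real.logb 2 (m1 x.1)) + -(q x * Real.logb 2 (m2 x.2)) := by
    intro x
    rcases (hq.1 x).lt_or_eq with h | h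
    · rw [Real.logb_mul (lt_of_lt_of_le h (le_push_self hq.1 Prod.fst x)).ne'
        (lt_of_lt_of_le h (le_push_self hq.1 Prod.snd x)).ne']
      ring
    · simp [← h]
  rw [Finset.sum_congr rfl fun x _ => hpt x, Finset.sum_add_distrib]
  unfold Hent
  rw [sum_neg_push q Prod.fst (fun a => Real.logb 2 (m1 a)),
    sum_neg_push q Prod.snd (fun b => Real.logb 2 (m2 b))]

lemma Hent_ssa {q : α × β × γ → ℝ} (hq : IsPMF q) :
    Hent q + Hent (push q (fun x => x.2.1))
      ≤ Hent (push q (fun x => (x.1, x.2.1))) + Hent (push q Prod.snd) := by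
  set qAB := push q (fun x : α × β × γ => (x.1, x.2.1)) with hABdef
  set qBC := push q (Prod.snd : α × β × γ → β × γ) with hBCdef
  set qB := push q (fun x : α × β × γ => x.2.1) with hBdef
  have hqAB := push_isPMF hq (fun x : α × β × γ => (x.1, x.2.1))
  have hqBC := push_isPMF hq (Prod.snd : α × β × γ → β × γ)
  have hqB := push_isPMF hq (fun x : α × β × γ => x.2.1)
  have margA : ∀ b, ∑ a, qAB (a, b) = qB b := by
    intro b
    have h1 : qB = push qAB Prod.snd := by
      rw [hABdef, hBdef, push_push]
      rfl
    rw [h1]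
    unfold push
    rw [Fintype.sum_prod_type]
    refine Finset.sum_congr rfl fun a _ => ?_
    simp
  have margC : ∀ b, ∑ c, qBC (b, c) = qB b := by
    intro b
    have h1 : qB = push qBC Prod.fst := by
      rw [hBCdef, hBdef, push_push]
      rfl
    rw [h1]
    unfold push
    rw [Fintype.sum_prod_type]
    rw [Finset.sum_comm]
    refine Finset.sum_congr rfl fun c _ => ?_
    simp
  set r : α × β × γ → ℝ :=
    fun x => if qB x.2.1 = 0 then 0 else qAB (x.1, x.2.1) * qBC x.2 / qB x.2.1 with hrdef
  have hr0 : ∀ x, 0 ≤ r x := by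
    intro x
    simp only [hrdef]
    split
    · exact le_rfl
    · exact div_nonneg (mul_nonneg (hqAB.1 _) (hqBC.1 _)) (hqB.1 _)
  have hrsum : ∑ x : α × β × γ, r x ≤ 1 := by
    have hcalc : ∑ x : α × β × γ, r x = ∑ b, qB b := by
      rw [Fintype.sum_prod_type, Finset.sum_comm, Fintype.sum_prod_type]
      refine Finset.sum_congr rfl fun b _ => ?_
      by_cases hb : qB b = 0
      · simp [hrdef, hb]
      · simp only [hrdef, if_neg hb]
        have h1 : ∀ c : γ, ∑ a, qAB (a, b) * qBC (b, c) / qB b = qBC (b, c) := by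
          intro c
          rw [← Finset.sum_div, ← Finset.sum_mul, margA b, mul_comm,
            mul_div_assoc, div_self hb, mul_one]
        rw [Finset.sum_congr rfl fun c _ => h1 c, margC b]
    rw [hcalc, hqB.2]
  have habs : ∀ x, 0 < q x → 0 < r x := by
    intro x hx
    have hB : 0 < qB x.2.1 := lt_of_lt_of_le hx (le_push_self hq.1 _ x)
    have hAB : 0 < qAB (x.1, x.2.1) := lt_of_lt_of_le hx (le_push_self hq.1 (fun x : α × β × γ => (x.1, x.2.1)) x)
    have hBC : 0 < qBC x.2 := lt_of_lt_of_le hx (le_push_self hq.1 _ x)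
    simp only [hrdef, if_neg hB.ne']
    positivity
  have hG := gibbs (q := r) hq hr0 hrsum habs
  have hpt : ∀ x, -(q x * Real.logb 2 (r x))
      = -(q x * Real.logb 2 (qAB (x.1, x.2.1))) + -(q x * Real.logb 2 (qBC x.2))
        - -(q x * Real.logb 2 (qB x.2.1)) := by
    intro x
    rcases (hq.1 x).lt_or_eq with hx | hx
    · have hB : 0 < qB x.2.1 := lt_of_lt_of_le hx (le_push_self hq.1 _ x)
      have hAB : 0 < qAB (x.1, x.2.1) := lt_of_lt_of_le hx (le_push_self hq.1 (fun x : α × β × γ => (x.1, x.2.1)) x)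
      have hBC : 0 < qBC x.2 := lt_of_lt_of_le hx (le_push_self hq.1 _ x)
      simp only [hrdef, if_neg hB.ne']
      rw [Real.logb_div (mul_pos hAB hBC).ne' hB.ne',
        Real.logb_mul hAB.ne' hBC.ne']
      ring
    · simp [← hx]
  have hsplit : ∑ x, -(q x * Real.logb 2 (r x))
      = Hent qAB + Hent qBC - Hent qB := by
    rw [Finset.sum_congr rfl fun x _ => hpt x, Finset.sum_sub_distrib,
      Finset.sum_add_distrib]
    unfold Hent
    rw [sum_neg_push q (fun x : α × β × γ => (x.1, x.2.1)) (fun y => Real.logb 2 (qAB y)),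
      sum_neg_push q (Prod.snd : α × β × γ → β × γ) (fun y => Real.logb 2 (qBC y)),
      sum_neg_push q (fun x : α × β × γ => x.2.1) (fun y => Real.logb 2 (qB y))]
  have hHB := hG.trans_eq hsplit
  linarith [hHB]

lemma Hent_prod2 {Pa : α → ℝ} {Q : β → ℝ} (hPa : IsPMF Pa) (hQ : IsPMF Q) :
    Hent (fun x : α × β => Pa x.1 * Q x.2) = Hent Pa + Hent Q := by
  unfold Hent
  have hpt : ∀ x : α × β, -(Pa x.1 * Q x.2 * Real.logb 2 (Pa x.1 * Q x.2))
      = -(Pa x.1 * Q x.2 * Real.logb 2 (Pa x.1))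
        + -(Pa x.1 * Q x.2 * Real.logb 2 (Q x.2)) := by
    intro x
    by_cases h1 : Pa x.1 = 0
    · simp [h1]
    by_cases h2 : Q x.2 = 0
    · simp [h2]
    rw [Real.logb_mul h1 h2]
    ring
  rw [Finset.sum_congr rfl fun x _ => hpt x, Finset.sum_add_distrib]
  congr 1
  · rw [Fintype.sum_prod_type]
    refine Finset.sum_congr rfl fun a _ => ?_
    have h3 : ∀ b, -(Pa a * Q b * Real.logb 2 (Pa a))
        = Q b * -(Pa a * Real.logb 2 (Pa a)) := fun b => by ring
    rw [Finset.sum_congr rfl fun b _ => h3 b, ← Finset.sum_mul, hQ.2, one_mul]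
  · rw [Fintype.sum_prod_type_right]
    refine Finset.sum_congr rfl fun b _ => ?_
    have h3 : ∀ a, -(Pa a * Q b * Real.logb 2 (Q b))
        = Pa a * -(Q b * Real.logb 2 (Q b)) := fun a => by ring
    rw [Finset.sum_congr rfl fun a _ => h3 a, ← Finset.sum_mul, hPa.2, one_mul]

variable {κ' π ρ : Type*} [Fintype κ'] [Fintype π] [Fintype ρ]

lemma push_prod_snd (Pa : κ' → ℝ) (Q : π → ℝ) (g : π → ρ) :
    push (fun x : κ' × π => Pa x.1 * Q x.2) (fun x => (x.1, g x.2))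
      = fun y => Pa y.1 * push Q g y.2 := by
  funext y
  obtain ⟨y1, y2⟩ := y
  unfold push
  rw [Fintype.sum_prod_type]
  dsimp only
  refine (Finset.sum_eq_single y1
    (fun x _ hx => Finset.sum_eq_zero fun z _ =>
      if_neg (fun hc => hx (congrArg Prod.fst hc)))
    (fun h => absurd (Finset.mem_univ _) h)).trans ?_
  rw [Finset.mul_sum]
  refine Finset.sum_congr rfl fun z _ => ?_
  by_cases hz : g z = y2
  · rw [if_pos (show ((y1 : κ'), g z) = (y1, y2) by rw [hz]), if_pos hz]
  · rw [if_neg (fun hc => hz (congrArg Prod.snd hc)), if_neg hz, mul_zero]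

variable {ι : Type*} [Fintype ι] [DecidableEq ι] {τ σ : ι → Type*} [∀ i, Fintype (τ i)] [∀ i, Fintype (σ i)]

lemma push_pi (P : ∀ i, τ i → ℝ) (g : ∀ i, τ i → σ i) :
    push (fun v : ∀ i, τ i => ∏ i, P i (v i)) (fun v i => g i (v i))
      = fun w => ∏ i, push (P i) (g i) (w i) := by
  funext w
  unfold push
  have : ∀ i : ι, (∑ a : τ i, if g i a = w i then P i a else 0)
      = ∑ a : τ i, (fun i (a : τ i) => if g i a = w i then P i a else 0) i a := fun i => rfl
  rw [Finset.prod_congr rfl fun i _ => this i, Fintype.prod_sum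
    (fun i (a : τ i) => if g i a = w i then P i a else 0)]
  refine Finset.sum_congr rfl fun v _ => ?_
  by_cases hv : (fun i => g i (v i)) = w
  · rw [if_pos hv]
    refine (Finset.prod_congr rfl fun i _ => ?_)
    rw [if_pos (congrFun hv i)]
  · rw [if_neg hv]
    have : ∃ i, g i (v i) ≠ w i := by
      by_contra hc
      push_neg at hc
      exact hv (funext hc)
    obtain ⟨i0, hi0⟩ := this
    exact (Finset.prod_eq_zero (Finset.mem_univ i0) (by rw [if_neg hi0])).symm

lemma Hent_prod {P : ∀ i, τ i → ℝ} (hP : ∀ i, IsPMF (P i)) :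
    Hent (fun v : ∀ i, τ i => ∏ i, P i (v i)) = ∑ i, Hent (P i) := by
  classical
  unfold Hent
  have hpt : ∀ v : ∀ i, τ i, -((∏ i, P i (v i)) * Real.logb 2 (∏ i, P i (v i)))
      = ∑ i, -((∏ j, P j (v j)) * Real.logb 2 (P i (v i))) := by
    intro v
    by_cases h : ∀ i, P i (v i) ≠ 0
    · rw [Real.logb_prod _ _ (fun i _ => h i), Finset.mul_sum, Finset.sum_neg_distrib]
    · push_neg at h
      obtain ⟨i0, h0⟩ := h
      have hz : (∏ i, P i (v i)) = 0 := Finset.prod_eq_zero (Finset.mem_univ i0) h0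
      simp [hz]
  rw [Finset.sum_congr rfl fun v _ => hpt v, Finset.sum_comm]
  refine Finset.sum_congr rfl fun i _ => ?_
  set f : ∀ j, τ j → ℝ :=
    Function.update (fun j (a : τ j) => P j a) i (fun a => P i a * Real.logb 2 (P i a))
    with hfdef
  have hprod : ∀ v : ∀ j, τ j,
      (∏ j, P j (v j)) * Real.logb 2 (P i (v i)) = ∏ j, f j (v j) := by
    intro v
    rw [← Finset.mul_prod_erase Finset.univ (fun j => f j (v j)) (Finset.mem_univ i),
      ← Finset.mul_prod_erase Finset.univ (fun j => P j (v j)) (Finset.mem_univ i)]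
    have h1 : f i (v i) = P i (v i) * Real.logb 2 (P i (v i)) := by
      rw [hfdef, Function.update_self]
    have h2 : ∀ j, j ≠ i → f j (v j) = P j (v j) := by
      intro j hj
      rw [hfdef, Function.update_of_ne hj]
    rw [h1, Finset.prod_congr rfl fun j hj => h2 j (Finset.ne_of_mem_erase hj)]
    ring
  have hsum : ∑ v : ∀ j, τ j, ∏ j, f j (v j) = ∑ a, P i a * Real.logb 2 (P i a) := by
    rw [← Fintype.prod_sum f]
    rw [Finset.prod_eq_single i (fun j _ hj => by
        rw [show (∑ a : τ j, f j a) = ∑ a : τ j, P j a by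
          exact Finset.sum_congr rfl fun a _ => by rw [hfdef, Function.update_of_ne hj]]
        exact (hP j).2)
      (fun hi => absurd (Finset.mem_univ i) hi)]
    refine Finset.sum_congr rfl fun a _ => ?_
    rw [hfdef, Function.update_self]
  have final : ∑ v : ∀ j, τ j, -((∏ j, P j (v j)) * Real.logb 2 (P i (v i)))
      = ∑ a, -(P i a * Real.logb 2 (P i a)) := by
    rw [Finset.sum_neg_distrib, Finset.sum_neg_distrib, neg_inj,
      Finset.sum_congr rfl fun v _ => hprod v, hsum]
  exact final

lemma pi_isPMF {P : ∀ i, τ i → ℝ} (hP : ∀ i, IsPMF (P i)) :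
    IsPMF (fun v : ∀ i, τ i => ∏ i, P i (v i)) := by
  constructor
  · exact fun v => Finset.prod_nonneg fun i _ => (hP i).1 _
  · rw [← Fintype.prod_sum P, Finset.prod_congr rfl fun i _ => (hP i).2, Finset.prod_const_one]

end S8

/-- **Converse step (eq. (8) of the paper).** On a finite probability space `(Ω, pΩ)`,
let the pairs `(X₁,Z₁), …, (X_n,Z_n)` be mutually independent, and let `K` be
independent of the whole collection `((X_i, Z_i))_i`. Then for any random variable `M`,
`H(M) ≥ Σ_i I(X_i ; (M, K, Z^{n∖i}) | Z_i)`. -/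
theorem statement8 {Ω : Type} [Fintype Ω] (pΩ : Ω → ℝ) (hp : IsPMF pΩ)
    (n : ℕ) (hn : 1 ≤ n)
    {𝒳 𝒵 : Fin n → Type} [∀ i, Fintype (𝒳 i)] [∀ i, Fintype (𝒵 i)]
    {𝒦 ℳ : Type} [Fintype 𝒦] [Fintype ℳ]
    (Xv : ∀ i, Ω → 𝒳 i) (Zv : ∀ i, Ω → 𝒵 i) (K : Ω → 𝒦) (M : Ω → ℳ)
    (hindep : ∀ v : ∀ i, 𝒳 i × 𝒵 i,
      push pΩ (fun ω i => (Xv i ω, Zv i ω)) v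
        = ∏ i, push pΩ (fun ω => (Xv i ω, Zv i ω)) (v i))
    (hKindep : ∀ (k : 𝒦) (v : ∀ i, 𝒳 i × 𝒵 i),
      push pΩ (fun ω => (K ω, fun i => (Xv i ω, Zv i ω))) (k, v)
        = push pΩ K k * push pΩ (fun ω i => (Xv i ω, Zv i ω)) v) :
    (∑ i, CI (push pΩ (fun ω =>
        (Xv i ω, (M ω, K ω, fun j : {j : Fin n // j ≠ i} => Zv j.1 ω), Zv i ω))))
      ≤ Hent (push pΩ M) := by
  classical
  set F : ℕ → ℝ := fun k => Hent (push pΩ (fun ω =>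
      ((M ω, K ω, fun j => Zv j ω), fun j : {j : Fin n // (j : ℕ) < k} => Xv j.1 ω))) with hFdef
  -- per-i bound
  have step : ∀ i : Fin n,
      CI (push pΩ (fun ω =>
        (Xv i ω, (M ω, K ω, fun j : {j : Fin n // j ≠ i} => Zv j.1 ω), Zv i ω)))
      ≤ (Hent (push pΩ (fun ω => (Xv i ω, Zv i ω))) - Hent (push pΩ (fun ω => Zv i ω)))
        + (F (i : ℕ) - F ((i : ℕ) + 1)) := by
    intro i
    have hZfun : ∀ ω, (fun j => if h : j = i then cast (congrArg 𝒵 h).symm (Zv i ω)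
        else Zv j ω) = (fun j => Zv j ω) := by
      intro ω
      funext j
      by_cases h : j = i
      · subst h
        rw [dif_pos rfl]
        exact eq_of_heq (cast_heq _ _)
      · rw [dif_neg h]
    have hb : Hent (push pΩ (fun ω =>
          ((M ω, K ω, fun j : {j : Fin n // j ≠ i} => Zv j.1 ω), Zv i ω)))
        = Hent (push pΩ (fun ω => (M ω, K ω, fun j => Zv j ω))) := by
      refine S8.Hent_eq_rv hp
        (e := fun x : (ℳ × 𝒦 × (∀ j : {j : Fin n // j ≠ i}, 𝒵 j.1)) × 𝒵 i =>
          (x.1.1, x.1.2.1, fun j => if h : j = i then cast (congrArg 𝒵 h).symm x.2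
            else x.1.2.2 ⟨j, h⟩))
        (e' := fun y => ((y.1, y.2.1, fun j => y.2.2 j.1), y.2.2 i))
        (fun ω => ?_) (fun ω => rfl)
      exact congrArg (fun u => (M ω, K ω, u)) (hZfun ω)
    have hc : Hent (push pΩ (fun ω =>
          (Xv i ω, (M ω, K ω, fun j : {j : Fin n // j ≠ i} => Zv j.1 ω), Zv i ω)))
        = Hent (push pΩ (fun ω => (Xv i ω, M ω, K ω, fun j => Zv j ω))) := by
      refine S8.Hent_eq_rv hp
        (e := fun x : 𝒳 i × (ℳ × 𝒦 × (∀ j : {j : Fin n // j ≠ i}, 𝒵 j.1)) × 𝒵 i =>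
          (x.1, x.2.1.1, x.2.1.2.1, fun j => if h : j = i then
            cast (congrArg 𝒵 h).symm x.2.2 else x.2.1.2.2 ⟨j, h⟩))
        (e' := fun y => (y.1, (y.2.1, y.2.2.1, fun j => y.2.2.2 j.1), y.2.2.2 i))
        (fun ω => ?_) (fun ω => rfl)
      exact congrArg (fun u => (Xv i ω, M ω, K ω, u)) (hZfun ω)
    have hssa : Hent (push pΩ (fun ω => (Xv i ω, (M ω, K ω, fun j => Zv j ω),
            fun j : {j : Fin n // (j : ℕ) < (i : ℕ)} => Xv j.1 ω)))
          + Hent (push pΩ (fun ω => (M ω, K ω, fun j => Zv j ω)))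
        ≤ Hent (push pΩ (fun ω => (Xv i ω, M ω, K ω, fun j => Zv j ω)))
          + Hent (push pΩ (fun ω => ((M ω, K ω, fun j => Zv j ω),
            fun j : {j : Fin n // (j : ℕ) < (i : ℕ)} => Xv j.1 ω))) := by
      have t := S8.Hent_ssa (S8.push_isPMF hp (fun ω => (Xv i ω, (M ω, K ω, fun j => Zv j ω),
        fun j : {j : Fin n // (j : ℕ) < (i : ℕ)} => Xv j.1 ω)))
      rw [S8.push_push, S8.push_push, S8.push_push] at t
      exact t
    have hFi : Hent (push pΩ (fun ω => ((M ω, K ω, fun j => Zv j ω),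
        fun j : {j : Fin n // (j : ℕ) < (i : ℕ)} => Xv j.1 ω))) = F (i : ℕ) := by
      simp only [hFdef]
    have hFsi : Hent (push pΩ (fun ω => (Xv i ω, (M ω, K ω, fun j => Zv j ω),
        fun j : {j : Fin n // (j : ℕ) < (i : ℕ)} => Xv j.1 ω))) = F ((i : ℕ) + 1) := by
      simp only [hFdef]
      refine S8.Hent_eq_rv hp
        (e := fun x : 𝒳 i × (ℳ × 𝒦 × (∀ j, 𝒵 j)) × (∀ j : {j : Fin n // (j : ℕ) < (i : ℕ)}, 𝒳 j.1) =>
          (x.2.1, fun j : {j : Fin n // (j : ℕ) < (i : ℕ) + 1} =>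
            if h : (j.1 : ℕ) < (i : ℕ) then x.2.2 ⟨j.1, h⟩
            else cast (congrArg 𝒳 (Fin.ext (Nat.le_antisymm (Nat.not_lt.mp h)
              (Nat.lt_succ_iff.mp j.2)))) x.1))
        (e' := fun y => (y.2 ⟨i, Nat.lt_succ_self _⟩,
          (y.1, fun j => y.2 ⟨j.1, Nat.lt_succ_of_lt j.2⟩)))
        (fun ω => ?_) (fun ω => rfl)
      refine congrArg (Prod.mk _) ?_
      funext j
      rcases j with ⟨j1, hj⟩
      by_cases h : (j1 : ℕ) < (i : ℕ)
      · rw [dif_pos h]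
      · rw [dif_neg h]
        have pf : i = j1 := Fin.ext (Nat.le_antisymm (Nat.not_lt.mp h) (Nat.lt_succ_iff.mp hj))
        subst pf
        exact eq_of_heq (cast_heq _ _)
    have hCI : CI (push pΩ (fun ω =>
          (Xv i ω, (M ω, K ω, fun j : {j : Fin n // j ≠ i} => Zv j.1 ω), Zv i ω)))
        = Hent (push pΩ (fun ω => (Xv i ω, Zv i ω)))
          + Hent (push pΩ (fun ω =>
              ((M ω, K ω, fun j : {j : Fin n // j ≠ i} => Zv j.1 ω), Zv i ω)))
          - Hent (push pΩ (fun ω =>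
              (Xv i ω, (M ω, K ω, fun j : {j : Fin n // j ≠ i} => Zv j.1 ω), Zv i ω)))
          - Hent (push pΩ (fun ω => Zv i ω)) := by
      unfold CI
      rw [S8.push_push, S8.push_push, S8.push_push]
      rfl
    linarith [hCI, hb, hc, hssa, hFi, hFsi]
  have hsum : (∑ i, CI (push pΩ (fun ω =>
        (Xv i ω, (M ω, K ω, fun j : {j : Fin n // j ≠ i} => Zv j.1 ω), Zv i ω))))
      ≤ (∑ i, (Hent (push pΩ (fun ω => (Xv i ω, Zv i ω))) - Hent (push pΩ (fun ω => Zv i ω))))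
        + (F 0 - F n) := by
    calc (∑ i, CI (push pΩ (fun ω =>
        (Xv i ω, (M ω, K ω, fun j : {j : Fin n // j ≠ i} => Zv j.1 ω), Zv i ω))))
        ≤ ∑ i : Fin n, ((Hent (push pΩ (fun ω => (Xv i ω, Zv i ω)))
            - Hent (push pΩ (fun ω => Zv i ω))) + (F (i : ℕ) - F ((i : ℕ) + 1))) :=
          Finset.sum_le_sum fun i _ => step i
      _ = _ := by
        rw [Finset.sum_add_distrib]
        congr 1
        rw [Fin.sum_univ_eq_sum_range (fun k => F k - F (k + 1)) n,
          Finset.sum_range_sub' F n]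
  have hF0 : F 0 = Hent (push pΩ (fun ω => (M ω, K ω, fun j => Zv j ω))) := by
    simp only [hFdef]
    exact S8.Hent_eq_rv hp (e := Prod.fst)
      (e' := fun t => (t, fun j : {j : Fin n // (j : ℕ) < 0} =>
        absurd j.2 (Nat.not_lt_zero _)))
      (fun ω => rfl)
      (fun ω => congrArg (Prod.mk _) (funext fun j => absurd j.2 (Nat.not_lt_zero _)))
  have hfun : push pΩ (fun ω => (K ω, fun i => (Xv i ω, Zv i ω)))
      = fun y : 𝒦 × (∀ i, 𝒳 i × 𝒵 i) =>
          push pΩ K y.1 * ∏ i, push pΩ (fun ω => (Xv i ω, Zv i ω)) (y.2 i) := by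
    funext y
    obtain ⟨k, v⟩ := y
    rw [hKindep k v, hindep v]
  have hKP : Hent (push pΩ (fun ω => (K ω, fun i => (Xv i ω, Zv i ω))))
      = Hent (push pΩ K) + ∑ i, Hent (push pΩ (fun ω => (Xv i ω, Zv i ω))) := by
    rw [hfun, S8.Hent_prod2 (S8.push_isPMF hp K)
        (S8.pi_isPMF fun i => S8.push_isPMF hp (fun ω => (Xv i ω, Zv i ω))),
      S8.Hent_prod (fun i => S8.push_isPMF hp (fun ω => (Xv i ω, Zv i ω)))]
  have hFn : Hent (push pΩ (fun ω => (K ω, fun i => (Xv i ω, Zv i ω)))) ≤ F n := by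
    simp only [hFdef]
    have t := S8.Hent_comp_le hp (fun ω =>
        ((M ω, K ω, fun j => Zv j ω), fun j : {j : Fin n // (j : ℕ) < n} => Xv j.1 ω))
      (fun y => (y.1.2.1, fun i : Fin n => (y.2 ⟨i, i.isLt⟩, y.1.2.2 i)))
    exact t
  have hsubadd : Hent (push pΩ (fun ω => (M ω, K ω, fun j => Zv j ω)))
      ≤ Hent (push pΩ M) + Hent (push pΩ (fun ω => (K ω, fun j => Zv j ω))) := by
    have t := S8.Hent_subadd (S8.push_isPMF hp (fun ω => (M ω, K ω, fun j => Zv j ω)))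
    rw [S8.push_push, S8.push_push] at t
    exact t
  have hKZ : Hent (push pΩ (fun ω => (K ω, fun j => Zv j ω)))
      = Hent (push pΩ K) + ∑ i, Hent (push pΩ (fun ω => Zv i ω)) := by
    have h1 : Hent (push pΩ (fun ω => (K ω, fun j => Zv j ω)))
        = Hent (push (push pΩ (fun ω => (K ω, fun i => (Xv i ω, Zv i ω))))
            (fun x : 𝒦 × (∀ i, 𝒳 i × 𝒵 i) => (x.1, fun i => (x.2 i).2))) := by
      rw [S8.push_push]
      rfl
    have h2 : push (fun y : 𝒦 × (∀ i, 𝒳 i × 𝒵 i) =>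
          push pΩ K y.1 * ∏ i, push pΩ (fun ω => (Xv i ω, Zv i ω)) (y.2 i))
          (fun x : 𝒦 × (∀ i, 𝒳 i × 𝒵 i) => (x.1, fun i => (x.2 i).2))
        = fun y => push pΩ K y.1
            * push (fun v : ∀ i, 𝒳 i × 𝒵 i => ∏ i, push pΩ (fun ω => (Xv i ω, Zv i ω)) (v i))
                (fun v => fun i => (v i).2) y.2 :=
      S8.push_prod_snd (push pΩ K)
        (fun v : ∀ i, 𝒳 i × 𝒵 i => ∏ i, push pΩ (fun ω => (Xv i ω, Zv i ω)) (v i))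
        (fun v => fun i => (v i).2)
    have h3 : push (fun v : ∀ i, 𝒳 i × 𝒵 i => ∏ i, push pΩ (fun ω => (Xv i ω, Zv i ω)) (v i))
          (fun v => fun i => (v i).2)
        = fun w => ∏ i, push (push pΩ (fun ω => (Xv i ω, Zv i ω))) Prod.snd (w i) :=
      S8.push_pi (fun i => push pΩ (fun ω => (Xv i ω, Zv i ω))) (fun _ => Prod.snd)
    rw [h1, hfun, h2, h3]
    rw [S8.Hent_prod2 (S8.push_isPMF hp K)
      (S8.pi_isPMF fun i => S8.push_isPMF
        (S8.push_isPMF hp (fun ω => (Xv i ω, Zv i ω))) Prod.snd),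
      S8.Hent_prod (fun i => S8.push_isPMF
        (S8.push_isPMF hp (fun ω => (Xv i ω, Zv i ω))) Prod.snd)]
    refine congrArg (fun s => Hent (push pΩ K) + s) (Finset.sum_congr rfl fun i _ => ?_)
    rw [S8.push_push]
    rfl
  have hsplit : (∑ i, (Hent (push pΩ (fun ω => (Xv i ω, Zv i ω)))
        - Hent (push pΩ (fun ω => Zv i ω))))
      = (∑ i, Hent (push pΩ (fun ω => (Xv i ω, Zv i ω))))
        - ∑ i, Hent (push pΩ (fun ω => Zv i ω)) :=
    Finset.sum_sub_distrib _ _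
  linarith [hsum, hF0, hKP, hFn, hsubadd, hKZ, hsplit]
end
end

section
/- Let n ≥ 1 and let (X₁,Y₁,Z₁),…,(X_n,Y_n,Z_n), M, K be random variables taking values in finite sets, defined on a common probability space, such that Z₁,…,Z_n are mutually independent. Then H(M,K) ≥ Σ_{i=1}^n I( (X_i,Y_i) ; (M, K, Z^{n∖i}) | Z_i ) − ( Σ_{i=1}^n H(X_i,Y_i,Z_i) − H(X^n,Y^n,Z^n) ), where Z^{n∖i} denotes the tuple (Z_j : j ≠ i) and X^n = (X₁,…,X_n), etc. -/
open scoped BigOperators Classical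

noncomputable section

section InfoInfra

variable {Ω : Type*} [Fintype Ω] {p : Ω → ℝ}

lemma push_nonneg (hp : ∀ ω, 0 ≤ p ω) {β : Type*} (f : Ω → β) (b : β) :
    0 ≤ push p f b := by
  apply Finset.sum_nonneg
  intro a _
  split <;> simp [hp a]

lemma push_sum {β : Type*} [Fintype β] (f : Ω → β) :
    ∑ b, push p f b = ∑ ω, p ω := by
  unfold push
  rw [Finset.sum_comm]
  simp

lemma push_push {β γ : Type*} [Fintype β] (f : Ω → β) (g : β → γ) :
    push (push p f) g = push p (g ∘ f) := by
  funext c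
  unfold push
  have step1 : ∀ b : β, (if g b = c then (∑ ω, if f ω = b then p ω else 0) else 0)
      = ∑ ω, if f ω = b then (if g b = c then p ω else 0) else 0 := by
    intro b
    by_cases h : g b = c <;> simp [h]
  rw [Finset.sum_congr rfl (fun b _ => step1 b), Finset.sum_comm]
  apply Finset.sum_congr rfl
  intro ω _
  rw [Finset.sum_ite_eq Finset.univ (f ω) (fun b => if g b = c then p ω else 0)]
  simp [Function.comp]

lemma push_apply_ge (hp : ∀ ω, 0 ≤ p ω) {β : Type*} (f : Ω → β) (ω : Ω) :
    p ω ≤ push p f (f ω) := by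
  have := Finset.single_le_sum (f := fun ω' => if f ω' = f ω then p ω' else 0)
    (fun ω' _ => by split <;> simp [hp ω']) (Finset.mem_univ ω)
  simpa [push] using this

lemma push_fiber_mono (hp : ∀ ω, 0 ≤ p ω) {β γ : Type*} {f : Ω → β} {g : Ω → γ} (ω : Ω)
    (h : ∀ ω', f ω' = f ω → g ω' = g ω) :
    push p f (f ω) ≤ push p g (g ω) := by
  apply Finset.sum_le_sum
  intro ω' _
  by_cases h1 : f ω' = f ω
  · simp [h1, h _ h1]
  · simp only [h1, if_false]
    split <;> simp [hp ω']

lemma push_fiber_congr {β γ : Type*} {f : Ω → β} {g : Ω → γ} (ω : Ω)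
    (h : ∀ ω', f ω' = f ω ↔ g ω' = g ω) :
    push p f (f ω) = push p g (g ω) := by
  apply Finset.sum_congr rfl
  intro ω' _
  simp only [h ω']

lemma hent_push {β : Type*} [Fintype β] (f : Ω → β) :
    Hent (push p f) = ∑ ω, -(p ω * Real.logb 2 (push p f (f ω))) := by
  unfold Hent
  have step1 : ∀ b : β, -(push p f b * Real.logb 2 (push p f b))
      = ∑ ω, (if f ω = b then -(p ω * Real.logb 2 (push p f b)) else 0) := by
    intro b
    rw [push, Finset.sum_mul, ← Finset.sum_neg_distrib]
    exact Finset.sum_congr rfl (fun ω _ => by split <;> simp)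
  rw [Finset.sum_congr rfl (fun b _ => step1 b), Finset.sum_comm]
  apply Finset.sum_congr rfl
  intro ω _
  rw [Finset.sum_ite_eq Finset.univ (f ω) (fun b => -(p ω * Real.logb 2 (push p f b)))]
  simp


lemma hent_congr {β γ : Type*} [Fintype β] [Fintype γ] {f : Ω → β} {g : Ω → γ}
    (h : ∀ ω ω', f ω' = f ω ↔ g ω' = g ω) :
    Hent (push p f) = Hent (push p g) := by
  rw [hent_push, hent_push]
  exact Finset.sum_congr rfl (fun ω _ => by rw [push_fiber_congr ω (h ω)])

lemma hent_mono (hp : ∀ ω, 0 ≤ p ω) {β γ : Type*} [Fintype β] [Fintype γ]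
    {f : Ω → β} {g : Ω → γ}
    (h : ∀ ω ω', f ω' = f ω → g ω' = g ω) :
    Hent (push p g) ≤ Hent (push p f) := by
  rw [hent_push, hent_push]
  apply Finset.sum_le_sum
  intro ω _
  rcases eq_or_lt_of_le (hp ω) with h0 | h0
  · simp [← h0]
  · have h1 : push p f (f ω) ≤ push p g (g ω) := push_fiber_mono hp ω (h ω)
    have h2 : 0 < push p f (f ω) := lt_of_lt_of_le h0 (push_apply_ge hp f ω)
    have h3 := Real.logb_le_logb_of_le (b := 2) (by norm_num) h2 h1
    nlinarith


lemma push_marginal {β γ : Type*} [Fintype β] (f : Ω → β) (h : Ω → γ) (c : γ) :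
    ∑ b, push p (fun ω => (f ω, h ω)) (b, c) = push p h c := by
  unfold push
  rw [Finset.sum_comm]
  apply Finset.sum_congr rfl
  intro ω _
  rcases eq_or_ne (h ω) c with h2 | h2 <;> simp [Prod.ext_iff, h2]

lemma ci_nonneg {α β γ : Type*} [Fintype α] [Fintype β] [Fintype γ]
    (q : α × β × γ → ℝ) (hq : ∀ x, 0 ≤ q x) :
    Hent q + Hent (push q (fun x => x.2.2))
      ≤ Hent (push q (fun x => (x.1, x.2.2))) + Hent (push q Prod.snd) := by
  set A : α × β × γ → ℝ := fun x => push q (fun y => (y.1, y.2.2)) (x.1, x.2.2) with hA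
  set B : α × β × γ → ℝ := fun x => push q Prod.snd x.2 with hB
  set C : α × β × γ → ℝ := fun x => push q (fun y => y.2.2) x.2.2 with hC
  set E : α × β × γ → ℝ := fun x => if q x = 0 then 0 else A x * B x / C x with hE
  have hlog2 : (0:ℝ) < Real.log 2 := Real.log_pos (by norm_num)
  have hAx : ∀ x, q x ≤ A x := fun x => push_apply_ge hq (fun y => (y.1, y.2.2)) x
  have hBx : ∀ x, q x ≤ B x := fun x => push_apply_ge hq Prod.snd x
  have hCx : ∀ x, q x ≤ C x := fun x => push_apply_ge hq (fun y => y.2.2) x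
  have key : ∀ x, -(q x * Real.logb 2 (q x)) + -(q x * Real.logb 2 (C x))
      ≤ -(q x * Real.logb 2 (A x)) + -(q x * Real.logb 2 (B x)) + (E x - q x) / Real.log 2 := by
    intro x
    rcases eq_or_lt_of_le (hq x) with h0 | h0
    · simp [hE, ← h0]
    · have hA0 : 0 < A x := lt_of_lt_of_le h0 (hAx x)
      have hB0 : 0 < B x := lt_of_lt_of_le h0 (hBx x)
      have hC0 : 0 < C x := lt_of_lt_of_le h0 (hCx x)
      have hE0 : E x = A x * B x / C x := by simp [hE, ne_of_gt h0]
      have ht0 : 0 < A x * B x / (q x * C x) := by positivity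
      have hlt : Real.log (A x * B x / (q x * C x)) ≤ A x * B x / (q x * C x) - 1 :=
        Real.log_le_sub_one_of_pos ht0
      have hsplit : Real.log (A x * B x / (q x * C x))
          = Real.log (A x) + Real.log (B x) - Real.log (q x) - Real.log (C x) := by
        rw [Real.log_div (by positivity) (by positivity),
          Real.log_mul (ne_of_gt hA0) (ne_of_gt hB0),
          Real.log_mul (ne_of_gt h0) (ne_of_gt hC0)]
        ring
      have hqt : q x * (A x * B x / (q x * C x)) = A x * B x / C x := by
        field_simp
      rw [hsplit] at hlt
      have h4 : q x * (Real.log (A x) + Real.log (B x) - Real.log (q x) - Real.log (C x))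
          ≤ A x * B x / C x - q x := by
        calc q x * (Real.log (A x) + Real.log (B x) - Real.log (q x) - Real.log (C x))
            ≤ q x * (A x * B x / (q x * C x) - 1) :=
              mul_le_mul_of_nonneg_left hlt (le_of_lt h0)
          _ = A x * B x / C x - q x := by rw [mul_sub, mul_one, hqt]
      have hdiv : q x * (Real.log (A x) + Real.log (B x) - Real.log (q x) - Real.log (C x))
            / Real.log 2 ≤ (A x * B x / C x - q x) / Real.log 2 :=
        (div_le_div_iff_of_pos_right hlog2).mpr h4
      have eqgoal : -(q x * Real.logb 2 (q x)) + -(q x * Real.logb 2 (C x))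
          - (-(q x * Real.logb 2 (A x)) + -(q x * Real.logb 2 (B x)))
          = q x * (Real.log (A x) + Real.log (B x) - Real.log (q x) - Real.log (C x))
            / Real.log 2 := by
        simp only [Real.logb]
        ring
      rw [hE0]
      linarith [eqgoal, hdiv]
  have hsnd : (Prod.snd : α × β × γ → β × γ) = fun y => (y.2.1, y.2.2) := rfl
  have hEsum : ∑ x, E x ≤ ∑ x, q x := by
    have step1 : ∑ x, E x ≤ ∑ x : α × β × γ, (if C x = 0 then 0 else A x * B x / C x) := by
      apply Finset.sum_le_sum
      intro x _
      by_cases h0 : q x = 0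
      · have hA0 : 0 ≤ A x := push_nonneg hq _ _
        have hB0 : 0 ≤ B x := push_nonneg hq _ _
        have hC0 : 0 ≤ C x := push_nonneg hq _ _
        simp only [hE, h0, if_pos]
        split
        · exact le_refl 0
        · positivity
      · have hC0 : 0 < C x := lt_of_lt_of_le (lt_of_le_of_ne (hq x) (Ne.symm h0)) (hCx x)
        simp [hE, h0, ne_of_gt hC0]
    refine le_trans step1 ?_
    have step2 : ∑ x : α × β × γ, (if C x = 0 then 0 else A x * B x / C x)
        = ∑ c : γ, (if push q (fun y => y.2.2) c = 0 then 0
            else push q (fun y => y.2.2) c) := by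
      rw [Fintype.sum_prod_type]
      have inner : ∀ a : α, (∑ y : β × γ, if C (a, y) = 0 then 0 else A (a, y) * B (a, y) / C (a, y))
          = ∑ c : γ, ∑ b : β, (if C (a, b, c) = 0 then 0 else A (a, b, c) * B (a, b, c) / C (a, b, c)) := by
        intro a
        rw [Fintype.sum_prod_type, Finset.sum_comm]
      rw [Finset.sum_congr rfl (fun a _ => inner a), Finset.sum_comm]
      apply Finset.sum_congr rfl
      intro c _
      by_cases hc : push q (fun y => y.2.2) c = 0
      · simp [hC, hc]
      · rw [if_neg hc]
        have term : ∀ a b, (if C (a, b, c) = 0 then (0:ℝ)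
              else A (a, b, c) * B (a, b, c) / C (a, b, c))
            = push q (fun y => (y.1, y.2.2)) (a, c) * push q Prod.snd (b, c)
              / push q (fun y => y.2.2) c := by
          intro a b
          have hCc : C (a, b, c) = push q (fun y => y.2.2) c := rfl
          rw [hCc, if_neg hc]
        calc (∑ a : α, ∑ b : β, if C (a, b, c) = 0 then (0:ℝ)
                else A (a, b, c) * B (a, b, c) / C (a, b, c))
            = ∑ a : α, ∑ b : β, push q (fun y => (y.1, y.2.2)) (a, c)
                * push q Prod.snd (b, c) / push q (fun y => y.2.2) c :=
              Finset.sum_congr rfl (fun a _ => Finset.sum_congr rfl (fun b _ => term a b))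
          _ = (∑ a : α, push q (fun y => (y.1, y.2.2)) (a, c))
                * (∑ b : β, push q Prod.snd (b, c)) / push q (fun y => y.2.2) c := by
              rw [Finset.sum_mul_sum, Finset.sum_div]
              exact Finset.sum_congr rfl fun a _ => (Finset.sum_div _ _ _).symm
          _ = push q (fun y => y.2.2) c := by
              have m1 : (∑ a : α, push q (fun y => (y.1, y.2.2)) (a, c))
                  = push q (fun y => y.2.2) c :=
                push_marginal (fun y : α × β × γ => y.1) (fun y => y.2.2) c
              have m2 : (∑ b : β, push q Prod.snd (b, c))
                  = push q (fun y => y.2.2) c := by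
                rw [hsnd]
                exact push_marginal (fun y : α × β × γ => y.2.1) (fun y => y.2.2) c
              rw [m1, m2, mul_div_assoc, div_self hc, mul_one]
    rw [step2]
    have step3 : (∑ c : γ, if push q (fun y => y.2.2) c = 0 then 0
          else push q (fun y => y.2.2) c)
        = ∑ c : γ, push q (fun y => y.2.2) c := by
      apply Finset.sum_congr rfl
      intro c _
      rcases eq_or_ne (push q (fun y => y.2.2) c) 0 with h | h <;> simp [h]
    rw [step3, push_sum]
  calc Hent q + Hent (push q (fun x => x.2.2))
      = ∑ x, (-(q x * Real.logb 2 (q x)) + -(q x * Real.logb 2 (C x))) := by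
        rw [hent_push (p := q) (fun x : α × β × γ => x.2.2)]
        unfold Hent
        rw [← Finset.sum_add_distrib]
    _ ≤ ∑ x, (-(q x * Real.logb 2 (A x)) + -(q x * Real.logb 2 (B x))
          + (E x - q x) / Real.log 2) := Finset.sum_le_sum (fun x _ => key x)
    _ = (∑ x, -(q x * Real.logb 2 (A x))) + (∑ x, -(q x * Real.logb 2 (B x)))
          + (∑ x, E x - ∑ x, q x) / Real.log 2 := by
        rw [Finset.sum_add_distrib, Finset.sum_add_distrib, ← Finset.sum_div,
          Finset.sum_sub_distrib]
    _ ≤ (∑ x, -(q x * Real.logb 2 (A x))) + (∑ x, -(q x * Real.logb 2 (B x))) := by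
        have : (∑ x, E x - ∑ x, q x) / Real.log 2 ≤ 0 :=
          div_nonpos_of_nonpos_of_nonneg (by linarith) (le_of_lt hlog2)
        linarith
    _ = Hent (push q (fun x => (x.1, x.2.2))) + Hent (push q Prod.snd) := by
        rw [hent_push (fun x : α × β × γ => (x.1, x.2.2)),
          hent_push (Prod.snd : α × β × γ → β × γ)]


lemma submodular (hp : ∀ ω, 0 ≤ p ω) {α β γ : Type*} [Fintype α] [Fintype β] [Fintype γ]
    (A : Ω → α) (B : Ω → β) (Cf : Ω → γ) :
    Hent (push p (fun ω => (A ω, B ω, Cf ω))) + Hent (push p Cf)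
      ≤ Hent (push p (fun ω => (A ω, Cf ω))) + Hent (push p (fun ω => (B ω, Cf ω))) := by
  set q := push p (fun ω => (A ω, B ω, Cf ω)) with hqdef
  have hq : ∀ x, 0 ≤ q x := fun x => push_nonneg hp _ x
  have e1 : push q (fun x => (x.1, x.2.2)) = push p (fun ω => (A ω, Cf ω)) :=
    push_push (fun ω => (A ω, B ω, Cf ω)) (fun x => (x.1, x.2.2))
  have e2 : push q Prod.snd = push p (fun ω => (B ω, Cf ω)) :=
    push_push (fun ω => (A ω, B ω, Cf ω)) Prod.snd
  have e3 : push q (fun x => x.2.2) = push p Cf :=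
    push_push (fun ω => (A ω, B ω, Cf ω)) (fun x => x.2.2)
  have := ci_nonneg q hq
  rw [e1, e2, e3] at this
  exact this

lemma hent_unit (hsum : ∑ ω, p ω = 1) : Hent (push p (fun _ : Ω => ())) = 0 := by
  have h1 : push p (fun _ : Ω => ()) () = 1 := by
    rw [← hsum]
    unfold push
    simp
  unfold Hent
  simp [h1]

lemma subadd (hp : ∀ ω, 0 ≤ p ω) (hsum : ∑ ω, p ω = 1)
    {α β : Type*} [Fintype α] [Fintype β] (A : Ω → α) (B : Ω → β) :
    Hent (push p (fun ω => (A ω, B ω))) ≤ Hent (push p A) + Hent (push p B) := by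
  have h := submodular hp A B (fun _ => ())
  rw [hent_unit hsum] at h
  have c1 : Hent (push p (fun ω => (A ω, B ω, ()))) = Hent (push p (fun ω => (A ω, B ω))) :=
    hent_congr (fun ω ω' => by simp [Prod.ext_iff])
  have c2 : Hent (push p (fun ω => (A ω, ()))) = Hent (push p A) :=
    hent_congr (fun ω ω' => by simp [Prod.ext_iff])
  have c3 : Hent (push p (fun ω => (B ω, ()))) = Hent (push p B) :=
    hent_congr (fun ω ω' => by simp [Prod.ext_iff])
  rw [c1, c2, c3] at h
  linarith

lemma hent_indep {ι : Type} [Fintype ι] [DecidableEq ι] {𝒵 : ι → Type} [∀ i, Fintype (𝒵 i)]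
    (hsum : ∑ ω, p ω = 1) (Zv : ∀ i, Ω → 𝒵 i)
    (hind : ∀ v : ∀ i, 𝒵 i, push p (fun ω i => Zv i ω) v = ∏ i, push p (Zv i) (v i)) :
    Hent (push p (fun ω i => Zv i ω)) = ∑ i, Hent (push p (Zv i)) := by
  set q : ∀ i, 𝒵 i → ℝ := fun i => push p (Zv i) with hq
  have hqsum : ∀ i, ∑ x, q i x = 1 := fun i => (push_sum (Zv i)).trans hsum
  have claim : ∀ v : ∀ i, 𝒵 i, (∏ i, q i (v i)) * Real.logb 2 (∏ i, q i (v i))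
      = ∑ i, (∏ j, q j (v j)) * Real.logb 2 (q i (v i)) := by
    intro v
    by_cases hz : ∀ i : ι, q i (v i) ≠ 0
    · rw [Real.logb_prod _ _ (fun i _ => hz i), Finset.mul_sum]
    · push_neg at hz
      obtain ⟨i0, hi0⟩ := hz
      have h0 : ∏ i, q i (v i) = 0 := Finset.prod_eq_zero (Finset.mem_univ i0) hi0
      simp [h0]
  calc Hent (push p (fun ω i => Zv i ω))
      = ∑ v : ∀ i, 𝒵 i, -((∏ i, q i (v i)) * Real.logb 2 (∏ i, q i (v i))) := by
        unfold Hent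
        exact Finset.sum_congr rfl (fun v _ => by rw [hind v])
    _ = ∑ v : ∀ i, 𝒵 i, ∑ i, -((∏ j, q j (v j)) * Real.logb 2 (q i (v i))) := by
        apply Finset.sum_congr rfl
        intro v _
        rw [claim v]
        exact (Finset.sum_neg_distrib _).symm
    _ = ∑ i, ∑ v : ∀ i, 𝒵 i, -((∏ j, q j (v j)) * Real.logb 2 (q i (v i))) :=
        Finset.sum_comm
    _ = ∑ i, Hent (push p (Zv i)) := by
        apply Finset.sum_congr rfl
        intro i _
        have hF : ∀ v : ∀ i, 𝒵 i, (∏ j, q j (v j)) * Real.logb 2 (q i (v i))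
            = ∏ j, (q j (v j) * (if j = i then Real.logb 2 (q j (v j)) else 1)) := by
          intro v
          rw [Finset.prod_mul_distrib, Finset.prod_ite_eq' Finset.univ i
            (fun j => Real.logb 2 (q j (v j)))]
          simp
        calc ∑ v : ∀ i, 𝒵 i, -((∏ j, q j (v j)) * Real.logb 2 (q i (v i)))
            = -∑ v : ∀ i, 𝒵 i, ∏ j, (q j (v j) * (if j = i then Real.logb 2 (q j (v j)) else 1)) := by
              rw [Finset.sum_neg_distrib]
              exact congrArg Neg.neg (Finset.sum_congr rfl (fun v _ => hF v))
          _ = -∏ j, ∑ x : 𝒵 j, (q j x * (if j = i then Real.logb 2 (q j x) else 1)) := by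
              rw [Finset.prod_univ_sum, Fintype.piFinset_univ]
          _ = -(∑ x : 𝒵 i, q i x * Real.logb 2 (q i x)) := by
              have hs : ∀ j, (∑ x : 𝒵 j, q j x * (if j = i then Real.logb 2 (q j x) else 1))
                  = if j = i then ∑ x : 𝒵 j, q j x * Real.logb 2 (q j x) else 1 := by
                intro j
                by_cases h : j = i
                · simp [h]
                · simp [h, hqsum j]
              rw [Finset.prod_congr rfl (fun j _ => hs j), Finset.prod_ite_eq' Finset.univ i
                (fun j => ∑ x : 𝒵 j, q j x * Real.logb 2 (q j x))]
              simp
          _ = Hent (push p (Zv i)) := by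
              unfold Hent
              rw [Finset.sum_neg_distrib]

lemma chain (hp : ∀ ω, 0 ≤ p ω) {ι : Type} [Fintype ι] [DecidableEq ι] {τ : ι → Type} [∀ i, Fintype (τ i)]
    {κ : Type} [Fintype κ] (T : ∀ i, Ω → τ i) (W : Ω → κ) :
    Hent (push p (fun ω => ((fun i => T i ω), W ω))) - Hent (push p W)
      ≤ ∑ i, (Hent (push p (fun ω => (T i ω, W ω))) - Hent (push p W)) := by
  have main : ∀ s : Finset ι,
      Hent (push p (fun ω => ((fun j : {j // j ∈ s} => T j.1 ω), W ω))) - Hent (push p W)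
        ≤ ∑ i ∈ s, (Hent (push p (fun ω => (T i ω, W ω))) - Hent (push p W)) := by
    intro s
    induction s using Finset.induction_on with
    | empty =>
      have c0 : Hent (push p (fun ω => ((fun j : {j // j ∈ (∅ : Finset ι)} => T j.1 ω), W ω)))
          = Hent (push p W) := by
        apply hent_congr
        intro ω ω'
        constructor
        · intro h
          exact (Prod.ext_iff.mp h).2
        · intro h
          refine Prod.ext ?_ h
          exact funext (fun j => absurd j.2 (Finset.notMem_empty j.1))
      rw [c0]
      simp
    | @insert a s ha ih =>
      have c1 : Hent (push p (fun ω => ((fun j : {j // j ∈ insert a s} => T j.1 ω), W ω)))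
          = Hent (push p (fun ω => (T a ω, (fun j : {j // j ∈ s} => T j.1 ω), W ω))) := by
        apply hent_congr
        intro ω ω'
        constructor
        · intro h
          have h1 := (Prod.ext_iff.mp h).1
          have h2 := (Prod.ext_iff.mp h).2
          refine Prod.ext ?_ (Prod.ext ?_ h2)
          · exact congrFun h1 ⟨a, Finset.mem_insert_self a s⟩
          · exact funext (fun j => congrFun h1 ⟨j.1, Finset.mem_insert_of_mem j.2⟩)
        · intro h
          have h1 := (Prod.ext_iff.mp h).1
          have h2 := (Prod.ext_iff.mp h).2
          have h21 := (Prod.ext_iff.mp h2).1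
          have h22 := (Prod.ext_iff.mp h2).2
          refine Prod.ext ?_ h22
          apply funext
          rintro ⟨j, hj⟩
          rcases Finset.mem_insert.mp hj with rfl | hj'
          · exact h1
          · exact congrFun h21 ⟨j, hj'⟩
      have sub := submodular hp (T a) (fun ω => (fun j : {j // j ∈ s} => T j.1 ω)) W
      rw [Finset.sum_insert ha, c1]
      linarith
  have cu : Hent (push p (fun ω => ((fun i => T i ω), W ω)))
      = Hent (push p (fun ω => ((fun j : {j // j ∈ (Finset.univ : Finset ι)} => T j.1 ω), W ω))) := by
    apply hent_congr
    intro ω ω'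
    constructor
    · intro h
      refine Prod.ext ?_ (Prod.ext_iff.mp h).2
      exact funext (fun j => congrFun (Prod.ext_iff.mp h).1 j.1)
    · intro h
      refine Prod.ext ?_ (Prod.ext_iff.mp h).2
      exact funext (fun i => congrFun (Prod.ext_iff.mp h).1 ⟨i, Finset.mem_univ i⟩)
  rw [cu] at *
  simpa using main Finset.univ


end InfoInfra

set_option maxHeartbeats 1000000 in
/-- **Converse step (eqs. (9)–(10) of the paper).** On a finite probability space
`(Ω, pΩ)`, if `Z₁, …, Z_n` are mutually independent, then for any `M, K`,
`H(M,K) ≥ Σ_i I((X_i,Y_i) ; (M, K, Z^{n∖i}) | Z_i)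
          − (Σ_i H(X_i,Y_i,Z_i) − H(X^n,Y^n,Z^n))`. -/
theorem statement9 {Ω : Type} [Fintype Ω] (pΩ : Ω → ℝ) (hp : IsPMF pΩ)
    (n : ℕ) (hn : 1 ≤ n)
    {𝒳 𝒴 𝒵 : Fin n → Type}
    [∀ i, Fintype (𝒳 i)] [∀ i, Fintype (𝒴 i)] [∀ i, Fintype (𝒵 i)]
    {ℳ 𝒦 : Type} [Fintype ℳ] [Fintype 𝒦]
    (Xv : ∀ i, Ω → 𝒳 i) (Yv : ∀ i, Ω → 𝒴 i) (Zv : ∀ i, Ω → 𝒵 i)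
    (M : Ω → ℳ) (K : Ω → 𝒦)
    (hZindep : ∀ v : ∀ i, 𝒵 i,
      push pΩ (fun ω i => Zv i ω) v = ∏ i, push pΩ (Zv i) (v i)) :
    (∑ i, CI (push pΩ (fun ω =>
        ((Xv i ω, Yv i ω),
         (M ω, K ω, fun j : {j : Fin n // j ≠ i} => Zv j.1 ω),
         Zv i ω))))
      - ((∑ i, Hent (push pΩ (fun ω => (Xv i ω, Yv i ω, Zv i ω))))
          - Hent (push pΩ (fun ω i => (Xv i ω, Yv i ω, Zv i ω))))
      ≤ Hent (push pΩ (fun ω => (M ω, K ω))) := by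
  obtain ⟨hp0, hps⟩ := hp
  -- Step 1: rewrite each CI term
  have step1 : ∀ i : Fin n, CI (push pΩ (fun ω =>
        ((Xv i ω, Yv i ω),
         (M ω, K ω, fun j : {j : Fin n // j ≠ i} => Zv j.1 ω),
         Zv i ω)))
      = Hent (push pΩ (fun ω => (Xv i ω, Yv i ω, Zv i ω)))
        + Hent (push pΩ (fun ω => ((M ω, K ω), fun k => Zv k ω)))
        - Hent (push pΩ (fun ω => ((Xv i ω, Yv i ω), (M ω, K ω), fun k => Zv k ω)))
        - Hent (push pΩ (Zv i)) := by
    intro i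
    unfold CI
    have e1 : push (push pΩ (fun ω =>
          ((Xv i ω, Yv i ω),
           (M ω, K ω, fun j : {j : Fin n // j ≠ i} => Zv j.1 ω),
           Zv i ω))) (fun x => (x.1, x.2.2))
        = push pΩ (fun ω => ((Xv i ω, Yv i ω), Zv i ω)) := push_push _ _
    have e2 : push (push pΩ (fun ω =>
          ((Xv i ω, Yv i ω),
           (M ω, K ω, fun j : {j : Fin n // j ≠ i} => Zv j.1 ω),
           Zv i ω))) Prod.snd
        = push pΩ (fun ω =>
            ((M ω, K ω, fun j : {j : Fin n // j ≠ i} => Zv j.1 ω), Zv i ω)) := push_push _ _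
    have e3 : push (push pΩ (fun ω =>
          ((Xv i ω, Yv i ω),
           (M ω, K ω, fun j : {j : Fin n // j ≠ i} => Zv j.1 ω),
           Zv i ω))) (fun x => x.2.2)
        = push pΩ (Zv i) := push_push _ _
    rw [e1, e2, e3]
    have c1 : Hent (push pΩ (fun ω => ((Xv i ω, Yv i ω), Zv i ω)))
        = Hent (push pΩ (fun ω => (Xv i ω, Yv i ω, Zv i ω))) := by
      apply hent_congr
      intro ω ω'
      simp only [Prod.ext_iff]
      tauto
    have c2 : Hent (push pΩ (fun ω =>
          ((M ω, K ω, fun j : {j : Fin n // j ≠ i} => Zv j.1 ω), Zv i ω)))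
        = Hent (push pΩ (fun ω => ((M ω, K ω), fun k => Zv k ω))) := by
      apply hent_congr
      intro ω ω'
      simp only [Prod.ext_iff, funext_iff]
      constructor
      · rintro ⟨⟨hM, hK, hrest⟩, hZi⟩
        refine ⟨⟨hM, hK⟩, ?_⟩
        intro k
        rcases eq_or_ne k i with rfl | hk
        · exact hZi
        · exact hrest ⟨k, hk⟩
      · rintro ⟨⟨hM, hK⟩, hZ⟩
        exact ⟨⟨hM, hK, fun j => hZ j.1⟩, hZ i⟩
    have c3 : Hent (push pΩ (fun ω =>
          ((Xv i ω, Yv i ω),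
           (M ω, K ω, fun j : {j : Fin n // j ≠ i} => Zv j.1 ω),
           Zv i ω)))
        = Hent (push pΩ (fun ω => ((Xv i ω, Yv i ω), (M ω, K ω), fun k => Zv k ω))) := by
      apply hent_congr
      intro ω ω'
      simp only [Prod.ext_iff, funext_iff]
      constructor
      · rintro ⟨⟨hX, hY⟩, ⟨hM, hK, hrest⟩, hZi⟩
        refine ⟨⟨hX, hY⟩, ⟨hM, hK⟩, ?_⟩
        intro k
        rcases eq_or_ne k i with rfl | hk
        · exact hZi
        · exact hrest ⟨k, hk⟩
      · rintro ⟨⟨hX, hY⟩, ⟨hM, hK⟩, hZ⟩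
        exact ⟨⟨hX, hY⟩, ⟨hM, hK, fun j => hZ j.1⟩, hZ i⟩
    rw [c1, c2, c3]
  -- abbreviated entropies
  have hchain : Hent (push pΩ (fun ω =>
        ((fun i => (Xv i ω, Yv i ω)), ((M ω, K ω), fun k => Zv k ω))))
      - Hent (push pΩ (fun ω => ((M ω, K ω), fun k => Zv k ω)))
      ≤ ∑ i, (Hent (push pΩ (fun ω => ((Xv i ω, Yv i ω), (M ω, K ω), fun k => Zv k ω)))
          - Hent (push pΩ (fun ω => ((M ω, K ω), fun k => Zv k ω)))) :=
    chain hp0 (fun i ω => (Xv i ω, Yv i ω)) (fun ω => ((M ω, K ω), fun k => Zv k ω))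
  have hmono : Hent (push pΩ (fun ω i => (Xv i ω, Yv i ω, Zv i ω)))
      ≤ Hent (push pΩ (fun ω =>
        ((fun i => (Xv i ω, Yv i ω)), ((M ω, K ω), fun k => Zv k ω)))) := by
    apply hent_mono hp0
    intro ω ω' h
    have h1 := (Prod.ext_iff.mp h).1
    have h2 := (Prod.ext_iff.mp (Prod.ext_iff.mp h).2).2
    funext k
    have hxy := congrFun h1 k
    have hz := congrFun h2 k
    exact Prod.ext (Prod.ext_iff.mp hxy).1 (Prod.ext (Prod.ext_iff.mp hxy).2 hz)
  have hsub : Hent (push pΩ (fun ω => ((M ω, K ω), fun k => Zv k ω)))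
      ≤ Hent (push pΩ (fun ω => (M ω, K ω))) + Hent (push pΩ (fun ω k => Zv k ω)) :=
    subadd hp0 hps (fun ω => (M ω, K ω)) (fun ω k => Zv k ω)
  have hindep : Hent (push pΩ (fun ω k => Zv k ω)) = ∑ i, Hent (push pΩ (Zv i)) :=
    hent_indep hps Zv hZindep
  have hsum1 : (∑ i, CI (push pΩ (fun ω =>
        ((Xv i ω, Yv i ω),
         (M ω, K ω, fun j : {j : Fin n // j ≠ i} => Zv j.1 ω),
         Zv i ω))))
      = (∑ i, Hent (push pΩ (fun ω => (Xv i ω, Yv i ω, Zv i ω))))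
        - (∑ i, Hent (push pΩ (Zv i)))
        - ∑ i, (Hent (push pΩ (fun ω => ((Xv i ω, Yv i ω), (M ω, K ω), fun k => Zv k ω)))
            - Hent (push pΩ (fun ω => ((M ω, K ω), fun k => Zv k ω)))) := by
    rw [← Finset.sum_sub_distrib, ← Finset.sum_sub_distrib]
    exact Finset.sum_congr rfl (fun i _ => by rw [step1 i]; ring)
  rw [hsum1]
  linarith [hchain, hmono, hsub, hindep]
end
end
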